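/- arXiv:2409.17335 — 3 statements merged into one kernel-verified Lean document; each statement's English description precedes it below -/
import Mathlib

section
/- Let k, m be positive integers and consider minimizing w₁² + ... + w_{k+m}² subject to w_i - w_j ≥ 1 for all 1 ≤ i ≤ k and k+1 ≤ j ≤ k+m. The minimum value is k·m/(k+m), achieved by w_i = m/(k+m) for i ≤ k and w_j = -k/(k+m) for j > k. -/
theorem constrained_min (k m : ℕ) (hk : 0 < k) (hm : 0 < m) :
    (∀ w : Fin (k + m) → ℝ,
      (∀ i j : Fin (k + m), (i : ℕ) < k → k ≤ (j : ℕ) → w i - w j ≥ 1) →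
      ((k : ℝ) * m) / ((k : ℝ) + m) ≤ ∑ i, (w i) ^ 2) ∧
    (∀ i j : Fin (k + m), (i : ℕ) < k → k ≤ (j : ℕ) →
      (if (i : ℕ) < k then (m : ℝ) / ((k : ℝ) + m) else -(k : ℝ) / ((k : ℝ) + m)) -
      (if (j : ℕ) < k then (m : ℝ) / ((k : ℝ) + m) else -(k : ℝ) / ((k : ℝ) + m)) ≥ 1) ∧
    (∑ i : Fin (k + m),
      (if (i : ℕ) < k then (m : ℝ) / ((k : ℝ) + m) else -(k : ℝ) / ((k : ℝ) + m)) ^ 2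
      = ((k : ℝ) * m) / ((k : ℝ) + m)) := by
  have hk' : (0:ℝ) < k := by exact_mod_cast hk
  have hm' : (0:ℝ) < m := by exact_mod_cast hm
  have hkm : (0:ℝ) < (k:ℝ) + m := by linarith
  refine ⟨?_, ?_, ?_⟩
  · intro w hw
    set A := ∑ i : Fin k, w (Fin.castAdd m i) with hAdef
    set B := ∑ j : Fin m, w (Fin.natAdd k j) with hBdef
    set S1 := ∑ i : Fin k, (w (Fin.castAdd m i))^2 with hS1
    set S2 := ∑ j : Fin m, (w (Fin.natAdd k j))^2 with hS2
    have hsum : ∑ i, (w i) ^ 2 = S1 + S2 := Fin.sum_univ_add _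
    have hA : A^2 ≤ (k:ℝ) * S1 := by
      simpa using sq_sum_le_card_mul_sum_sq (s := (Finset.univ : Finset (Fin k)))
        (f := fun i => w (Fin.castAdd m i))
    have hB : B^2 ≤ (m:ℝ) * S2 := by
      simpa using sq_sum_le_card_mul_sum_sq (s := (Finset.univ : Finset (Fin m)))
        (f := fun j => w (Fin.natAdd k j))
    have hc : (k:ℝ) * m ≤ (m:ℝ) * A - (k:ℝ) * B := by
      have key : ∀ i : Fin k, ∀ j : Fin m,
          (1:ℝ) ≤ w (Fin.castAdd m i) - w (Fin.natAdd k j) := by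
        intro i j
        exact hw _ _ (by simpa using i.isLt) (by simp)
      have h1 : ((k:ℝ) * m) ≤ ∑ i : Fin k, ∑ j : Fin m,
          (w (Fin.castAdd m i) - w (Fin.natAdd k j)) := by
        calc ((k:ℝ) * m) = ∑ _i : Fin k, ∑ _j : Fin m, (1:ℝ) := by
              simp [mul_comm]
          _ ≤ _ := Finset.sum_le_sum fun i _ => Finset.sum_le_sum fun j _ => key i j
      have h2 : ∑ i : Fin k, ∑ j : Fin m,
          (w (Fin.castAdd m i) - w (Fin.natAdd k j)) = (m:ℝ) * A - (k:ℝ) * B := by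
        simp [Finset.sum_sub_distrib, Finset.sum_comm, Finset.mul_sum, hAdef, hBdef]
        try ring
      rw [h2] at h1; exact h1
    rw [hsum, div_le_iff₀ hkm]
    have hc2 : ((k:ℝ)*m) * ((k:ℝ)*m) ≤ ((m:ℝ)*A - k*B) * ((m:ℝ)*A - k*B) :=
      mul_le_mul hc hc (by positivity) (by nlinarith)
    nlinarith [sq_nonneg (A + B), mul_pos hk' hm', mul_le_mul_of_nonneg_left hA (le_of_lt (mul_pos hm' hkm)), mul_le_mul_of_nonneg_left hB (le_of_lt (mul_pos hk' hkm))]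
  · intro i j hi hj
    rw [if_pos hi, if_neg (by omega)]
    have h : (m:ℝ)/((k:ℝ)+m) - -(k:ℝ)/((k:ℝ)+m) = 1 := by field_simp; ring
    rw [h]
  · rw [Fin.sum_univ_add]
    have h1 : ∀ i : Fin k, ((Fin.castAdd m i : Fin (k+m)) : ℕ) < k := fun i => by
      simpa using i.isLt
    have h2 : ∀ j : Fin m, ¬ ((Fin.natAdd k j : Fin (k+m)) : ℕ) < k := fun j => by
      simp
    have e1 : ∀ i : Fin k, (if ((Fin.castAdd m i : Fin (k+m)) : ℕ) < k then (m : ℝ) / ((k : ℝ) + m) else -(k : ℝ) / ((k : ℝ) + m)) ^ 2 = ((m:ℝ)/((k:ℝ)+m))^2 := fun i => by rw [if_pos (h1 i)]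
    have e2 : ∀ j : Fin m, (if ((Fin.natAdd k j : Fin (k+m)) : ℕ) < k then (m : ℝ) / ((k : ℝ) + m) else -(k : ℝ) / ((k : ℝ) + m)) ^ 2 = (-(k:ℝ)/((k:ℝ)+m))^2 := fun j => by rw [if_neg (h2 j)]
    rw [Finset.sum_congr rfl (fun i _ => e1 i), Finset.sum_congr rfl (fun j _ => e2 j),
      Finset.sum_const, Finset.sum_const]
    simp only [Finset.card_univ, Fintype.card_fin, nsmul_eq_mul]
    field_simp
    ring
end

section
/- Let f : ℝ^{m×n} → ℝ be differentiable and suppose there exists a unit-norm matrix U such that ⟨∇f(W), U⟩ ≤ -c·‖∇f(W)‖ for some constant c > 0 at every iterate of normalized gradient descent W^{(t+1)} = W^{(t)} - η·∇f(W^{(t)})/‖∇f(W^{(t)})‖. Then ‖W^{(t)}‖ ≥ c·t·η - ‖W^{(0)}‖ for all t. -/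
open scoped RealInnerProductSpace

theorem ngd_norm_lower_bound (m n : ℕ)
    (f : EuclideanSpace ℝ (Fin m × Fin n) → ℝ)
    (hdiff : Differentiable ℝ f)
    (η : ℝ) (hη : 0 < η) (c : ℝ) (hc : 0 < c)
    (U : EuclideanSpace ℝ (Fin m × Fin n)) (hU : ‖U‖ = 1)
    (W : ℕ → EuclideanSpace ℝ (Fin m × Fin n))
    (hgrad : ∀ t, gradient f (W t) ≠ 0)
    (halign : ∀ t, ⟪gradient f (W t), U⟫ ≤ -c * ‖gradient f (W t)‖)
    (hupd : ∀ t, W (t + 1) = W t - (η / ‖gradient f (W t)‖) • gradient f (W t)) :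
    ∀ t : ℕ, c * t * η - ‖W 0‖ ≤ ‖W t‖ := by
  have key : ∀ t : ℕ, c * t * η + ⟪W 0, U⟫ ≤ ⟪W t, U⟫ := by
    intro t
    induction t with
    | zero => simp
    | succ t ih =>
      have hg : (0:ℝ) < ‖gradient f (W t)‖ := norm_pos_iff.mpr (hgrad t)
      have h1 : ⟪W (t+1), U⟫ = ⟪W t, U⟫ - (η / ‖gradient f (W t)‖) * ⟪gradient f (W t), U⟫ := by
        rw [hupd t, inner_sub_left, inner_smul_left]
        simp
      have h2 : (η / ‖gradient f (W t)‖) * ⟪gradient f (W t), U⟫ ≤ -(c * η) := by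
        have := halign t
        have hcoef : 0 < η / ‖gradient f (W t)‖ := div_pos hη hg
        calc (η / ‖gradient f (W t)‖) * ⟪gradient f (W t), U⟫
            ≤ (η / ‖gradient f (W t)‖) * (-c * ‖gradient f (W t)‖) :=
              mul_le_mul_of_nonneg_left this hcoef.le
          _ = -(c * η) := by field_simp
      have : ⟪W t, U⟫ + c * η ≤ ⟪W (t+1), U⟫ := by
        rw [h1]; linarith
      push_cast
      linarith
  intro t
  have h3 : ⟪W t, U⟫ ≤ ‖W t‖ := by
    calc ⟪W t, U⟫ ≤ ‖W t‖ * ‖U‖ := real_inner_le_norm _ _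
      _ = ‖W t‖ := by rw [hU, mul_one]
  have h4 : -‖W 0‖ ≤ ⟪W 0, U⟫ := by
    have := abs_real_inner_le_norm (W 0) U
    rw [hU, mul_one] at this
    linarith [abs_le.mp this]
  linarith [key t]
end

section
/- Under the setting of the previous statement (orthonormal tokens, k optimal tokens O, m non-optimal tokens N), any matrix W satisfying (x* - x)ᵀ W q ≥ 1 for all x* ∈ O, x ∈ N has squared Frobenius norm ‖W‖² ≥ k·m/(k+m). -/
open scoped Matrix

private lemma sum_dotProduct' {d : ℕ} {ι : Type*} (s : Finset ι)
    (f : ι → Fin d → ℝ) (w : Fin d → ℝ) :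
    (∑ x ∈ s, f x) ⬝ᵥ w = ∑ x ∈ s, f x ⬝ᵥ w := by
  simp only [dotProduct, Finset.sum_apply, Finset.sum_mul]
  exact Finset.sum_comm

private lemma dotProduct_sum' {d : ℕ} {ι : Type*} (s : Finset ι)
    (w : Fin d → ℝ) (f : ι → Fin d → ℝ) :
    w ⬝ᵥ (∑ x ∈ s, f x) = ∑ x ∈ s, w ⬝ᵥ f x := by
  rw [dotProduct_comm, sum_dotProduct']
  exact Finset.sum_congr rfl fun x _ => dotProduct_comm _ _

theorem margin_norm_lower_bound (d : ℕ) (V O N : Finset (Fin d → ℝ))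
    (q : Fin d → ℝ) (hq : q ∈ V)
    (hnorm : ∀ x ∈ V, x ⬝ᵥ x = 1)
    (horth : ∀ x ∈ V, ∀ y ∈ V, x ≠ y → x ⬝ᵥ y = 0)
    (hO : O ⊆ V) (hN : N ⊆ V) (hON : Disjoint O N)
    (W : Matrix (Fin d) (Fin d) ℝ)
    (hmargin : ∀ xs ∈ O, ∀ x ∈ N, (xs - x) ⬝ᵥ (W.mulVec q) ≥ 1) :
    ((O.card : ℝ) * N.card) / ((O.card : ℝ) + N.card) ≤ ∑ i, ∑ j, (W i j) ^ 2 := by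
  set u : Fin d → ℝ := W.mulVec q with hu
  set k : ℝ := (O.card : ℝ) with hk
  set m : ℝ := (N.card : ℝ) with hm
  have hT0 : (0:ℝ) ≤ ∑ i, ∑ j, (W i j) ^ 2 := by positivity
  -- trivial cases
  rcases Nat.eq_zero_or_pos O.card with hk0 | hkpos
  · have : k = 0 := by rw [hk, hk0]; norm_num
    rw [this]
    simpa using hT0
  rcases Nat.eq_zero_or_pos N.card with hm0 | hmpos
  · have : m = 0 := by rw [hm, hm0]; norm_num
    rw [this]
    simpa using hT0
  have hkpos' : (0:ℝ) < k := by rw [hk]; exact_mod_cast hkpos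
  have hmpos' : (0:ℝ) < m := by rw [hm]; exact_mod_cast hmpos
  -- step 1: ‖u‖² ≤ ‖W‖²
  have hq1 : ∑ j, q j ^ 2 = 1 := by
    have := hnorm q hq
    simpa [dotProduct, pow_two] using this
  have h1 : u ⬝ᵥ u ≤ ∑ i, ∑ j, (W i j) ^ 2 := by
    have hrow : ∀ i, u i ^ 2 ≤ ∑ j, (W i j) ^ 2 := by
      intro i
      have hcs := Finset.sum_mul_sq_le_sq_mul_sq Finset.univ (fun j => W i j) q
      rw [hq1, mul_one] at hcs
      simpa [hu, Matrix.mulVec, dotProduct] using hcs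
    calc u ⬝ᵥ u = ∑ i, u i ^ 2 := by simp [dotProduct, pow_two]
    _ ≤ ∑ i, ∑ j, (W i j) ^ 2 := Finset.sum_le_sum fun i _ => hrow i
  -- step 2 (Bessel): ∑_{x∈V} (x⬝u)² ≤ u⬝u
  set v : Fin d → ℝ := ∑ x ∈ V, (x ⬝ᵥ u) • x with hv
  have hxv : ∀ x ∈ V, x ⬝ᵥ v = x ⬝ᵥ u := by
    intro x hx
    rw [hv, dotProduct_sum']
    rw [Finset.sum_eq_single_of_mem x hx]
    · simp [hnorm x hx]
    · intro y hy hne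
      simp [horth x hx y hy (Ne.symm hne)]
  have hvu : v ⬝ᵥ u = ∑ x ∈ V, (x ⬝ᵥ u) ^ 2 := by
    rw [hv, sum_dotProduct']
    exact Finset.sum_congr rfl fun x hx => by simp [pow_two]
  have hvv : v ⬝ᵥ v = ∑ x ∈ V, (x ⬝ᵥ u) ^ 2 := by
    rw [hv, sum_dotProduct']
    refine Finset.sum_congr rfl fun x hx => ?_
    rw [smul_dotProduct, hxv x hx]
    simp [pow_two]
  have huv : u ⬝ᵥ v = ∑ x ∈ V, (x ⬝ᵥ u) ^ 2 := by
    rw [dotProduct_comm]; exact hvu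
  have hbessel : ∑ x ∈ V, (x ⬝ᵥ u) ^ 2 ≤ u ⬝ᵥ u := by
    have hnn : 0 ≤ (u - v) ⬝ᵥ (u - v) :=
      Finset.sum_nonneg fun i _ => mul_self_nonneg _
    have hexp : (u - v) ⬝ᵥ (u - v)
        = u ⬝ᵥ u - ∑ x ∈ V, (x ⬝ᵥ u) ^ 2 := by
      rw [sub_dotProduct, dotProduct_sub, dotProduct_sub,
        huv, hvu, hvv]
      ring
    linarith [hexp ▸ hnn]
  -- step 3: restrict to O ∪ N
  have hsub : O ∪ N ⊆ V := Finset.union_subset hO hN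
  have hrestr : ∑ x ∈ O ∪ N, (x ⬝ᵥ u) ^ 2 ≤ ∑ x ∈ V, (x ⬝ᵥ u) ^ 2 :=
    Finset.sum_le_sum_of_subset_of_nonneg hsub fun x _ _ => sq_nonneg _
  -- step 4: margin sum
  have hmsum : k * m ≤ ∑ x ∈ O ∪ N, (if x ∈ O then m else -k) * (x ⬝ᵥ u) := by
    rw [Finset.sum_union hON]
    have hO' : ∑ x ∈ O, (if x ∈ O then m else -k) * (x ⬝ᵥ u)
        = m * ∑ x ∈ O, x ⬝ᵥ u := by
      rw [Finset.mul_sum]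
      exact Finset.sum_congr rfl fun x hx => by rw [if_pos hx]
    have hN' : ∑ x ∈ N, (if x ∈ O then m else -k) * (x ⬝ᵥ u)
        = -k * ∑ x ∈ N, x ⬝ᵥ u := by
      rw [Finset.mul_sum]
      refine Finset.sum_congr rfl fun x hx => ?_
      rw [if_neg (Finset.disjoint_right.mp hON hx)]
    rw [hO', hN']
    have expand : ∀ x : Fin d → ℝ, ∑ y ∈ N, ((x - y) ⬝ᵥ u)
        = m * (x ⬝ᵥ u) - ∑ y ∈ N, y ⬝ᵥ u := by
      intro x
      simp only [sub_dotProduct, Finset.sum_sub_distrib,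
        Finset.sum_const, nsmul_eq_mul, hm]
    calc k * m = ∑ _x ∈ O, ∑ _y ∈ N, (1:ℝ) := by simp [hk, hm]
    _ ≤ ∑ x ∈ O, ∑ y ∈ N, ((x - y) ⬝ᵥ u) :=
        Finset.sum_le_sum fun x hx => Finset.sum_le_sum fun y hy =>
          hmargin x hx y hy
    _ = ∑ x ∈ O, (m * (x ⬝ᵥ u) - ∑ y ∈ N, y ⬝ᵥ u) :=
        Finset.sum_congr rfl fun x _ => expand x
    _ = m * ∑ x ∈ O, x ⬝ᵥ u + -k * ∑ x ∈ N, x ⬝ᵥ u := by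
        rw [Finset.sum_sub_distrib, ← Finset.mul_sum, Finset.sum_const,
          nsmul_eq_mul, ← hk]
        ring
  -- step 5: Cauchy-Schwarz on coefficients
  have hcs := Finset.sum_mul_sq_le_sq_mul_sq (O ∪ N)
      (fun x => if x ∈ O then m else -k) (fun x => x ⬝ᵥ u)
  have hcoef : ∑ x ∈ O ∪ N, (if x ∈ O then m else -k) ^ 2 = k * m * (k + m) := by
    rw [Finset.sum_union hON]
    have e1 : ∑ x ∈ O, (if x ∈ O then m else -k) ^ 2 = k * m ^ 2 := by
      calc ∑ x ∈ O, (if x ∈ O then m else -k) ^ 2 = ∑ _x ∈ O, m ^ 2 :=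
            Finset.sum_congr rfl fun x hx => by rw [if_pos hx]
      _ = k * m ^ 2 := by rw [Finset.sum_const, nsmul_eq_mul, ← hk]
    have e2 : ∑ x ∈ N, (if x ∈ O then m else -k) ^ 2 = m * k ^ 2 := by
      calc ∑ x ∈ N, (if x ∈ O then m else -k) ^ 2 = ∑ _x ∈ N, k ^ 2 :=
            Finset.sum_congr rfl fun x hx => by
              rw [if_neg (Finset.disjoint_right.mp hON hx)]; ring
      _ = m * k ^ 2 := by rw [Finset.sum_const, nsmul_eq_mul, ← hm]
    rw [e1, e2]; ring
  set T : ℝ := ∑ i, ∑ j, (W i j) ^ 2 with hTdef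
  have hkm2 : (k * m) ^ 2 ≤ k * m * (k + m) * T := by
    calc (k * m) ^ 2 ≤ (∑ x ∈ O ∪ N, (if x ∈ O then m else -k) * (x ⬝ᵥ u)) ^ 2 :=
          pow_le_pow_left₀ (by positivity) hmsum 2
    _ ≤ (∑ x ∈ O ∪ N, (if x ∈ O then m else -k) ^ 2) *
          ∑ x ∈ O ∪ N, (x ⬝ᵥ u) ^ 2 := hcs
    _ = k * m * (k + m) * ∑ x ∈ O ∪ N, (x ⬝ᵥ u) ^ 2 := by rw [hcoef]
    _ ≤ k * m * (k + m) * T := by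
        refine mul_le_mul_of_nonneg_left ?_ (by positivity)
        exact le_trans hrestr (le_trans hbessel h1)
  rw [div_le_iff₀ (by positivity)]
  nlinarith [hkm2, mul_pos hkpos' hmpos']
end
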